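/- (Corollary: the final global state.) Let H be a complex Hilbert space, N a natural number, and m a finite set of positions in Fin N (the positions Bob measures). Set R := ({k : Fin N // k ∈ m} → Bool), let g : (Fin N → Bool) → R be the restriction map g(i)(k) = i(k), and let b₀ ∈ R be the all-false string. Model the total space of Eve's probe, Alice's N qubits, and Bob's register as L²((Fin N → Bool) × R; H), where |E⟩⊗|i⟩⊗|b⟩ corresponds to the family (E at (i,b), 0 elsewhere). Let U_E and U_F be unitaries of L²((Fin N → Bool); H), let E, F : (Fin N → Bool) → H satisfy U_E(e₀⊗|i⟩) = E_i⊗|i⟩ and U_F(E_i⊗|i⟩) = F_i⊗|i⟩ for all i, where e₀ ∈ H. Let V_E and V_F be unitaries of the total space acting as U_E (respectively U_F) on each Bob-register slice, i.e., for every vector v and every b ∈ R, the family i ↦ (V_E v)(i,b) equals U_E applied to the family i ↦ v(i,b), and likewise for V_F with U_F. Let V_B be the unitary of the total space given by (V_B v)(i,b) = v(i, b XOR g(i)), where XOR is taken pointwise (this is Bob's measure-and-resend operation U_m with delayed measurement). Then for every i ∈ (Fin N → Bool), V_F(V_B(V_E(e₀⊗|i⟩⊗|b₀⟩))) = F_i⊗|i⟩⊗|g(i)⟩,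 i.e., the final global state is the family equal to F_i at index (i, g(i)) and 0 elsewhere. -/

import Mathlib

open scoped InnerProductSpace

/-- The product state `w ⊗ |j⟩` in `L²(ι; H)`: the family equal to `w` at
index `j` and `0` elsewhere. -/
noncomputable def prodState {ι : Type*} [DecidableEq ι] {H : Type*}
    [NormedAddCommGroup H] [InnerProductSpace ℂ H] (j : ι) (w : H) :
    PiLp 2 (fun _ : ι => H) :=
  (WithLp.equiv 2 (ι → H)).symm (Pi.single j w)

/-- The bobSlice of a vector of the total space (Eve's probe ⊗ Alice's `N` qubits
⊗ Bob's register) along a fixed basis state `b` of Bob's register, as a vector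
of `L²((Fin N → Bool); H)`. -/
noncomputable def bobSlice {N : ℕ} {R : Type*} {H : Type*}
    [NormedAddCommGroup H] [InnerProductSpace ℂ H]
    (v : PiLp 2 (fun _ : (Fin N → Bool) × R => H)) (b : R) :
    PiLp 2 (fun _ : Fin N → Bool => H) :=
  (WithLp.equiv 2 ((Fin N → Bool) → H)).symm fun i => v (i, b)

lemma slices_ext {N : ℕ} {R : Type*} {H : Type*}
    [NormedAddCommGroup H] [InnerProductSpace ℂ H]
    {v w : PiLp 2 (fun _ : (Fin N → Bool) × R => H)}
    (h : ∀ b, bobSlice v b = bobSlice w b) : v = w := by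
  refine PiLp.ext fun p => ?_
  exact congrArg (fun x => x p.1) (h p.2)

lemma slice_single {N : ℕ} {R : Type*} [DecidableEq R] {H : Type*}
    [NormedAddCommGroup H] [InnerProductSpace ℂ H]
    (j : Fin N → Bool) (b : R) (wH : H) (b' : R) :
    bobSlice (prodState (j, b) wH) b' = if b' = b then prodState j wH else 0 := by
  refine PiLp.ext fun i' => ?_
  simp only [bobSlice, prodState, WithLp.equiv_symm_apply, PiLp.toLp_apply, Pi.single_apply,
    Prod.mk.injEq, apply_ite (fun x : PiLp 2 (fun _ : Fin N → Bool => H) => x i'), PiLp.zero_apply]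
  split_ifs with h1 h2 h3 h3 <;> simp_all

/-- Corollary: the final global state.  If `U_E (e₀ ⊗ |i⟩) = E_i ⊗ |i⟩` and
`U_F (E_i ⊗ |i⟩) = F_i ⊗ |i⟩`, then for every bit string `i` the final global
state `V_F (V_B (V_E (e₀ ⊗ |i⟩ ⊗ |b₀⟩)))` is `F_i ⊗ |i⟩ ⊗ |i_m⟩`. -/
theorem stmt_4 {H : Type*} [NormedAddCommGroup H] [InnerProductSpace ℂ H]
    [CompleteSpace H] (N : ℕ) (m : Finset (Fin N))
    (U_E U_F : PiLp 2 (fun _ : Fin N → Bool => H) ≃ₗᵢ[ℂ]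
               PiLp 2 (fun _ : Fin N → Bool => H))
    (e₀ : H) (E F : (Fin N → Bool) → H)
    (hE : ∀ i : Fin N → Bool, U_E (prodState i e₀) = prodState i (E i))
    (hF : ∀ i : Fin N → Bool, U_F (prodState i (E i)) = prodState i (F i))
    (V_E V_F V_B :
      PiLp 2 (fun _ : (Fin N → Bool) × ({k : Fin N // k ∈ m} → Bool) => H) ≃ₗᵢ[ℂ]
      PiLp 2 (fun _ : (Fin N → Bool) × ({k : Fin N // k ∈ m} → Bool) => H))
    (hVE : ∀ (v : PiLp 2 (fun _ : (Fin N → Bool) × ({k : Fin N // k ∈ m} → Bool) => H))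
      (b : {k : Fin N // k ∈ m} → Bool), bobSlice (V_E v) b = U_E (bobSlice v b))
    (hVF : ∀ (v : PiLp 2 (fun _ : (Fin N → Bool) × ({k : Fin N // k ∈ m} → Bool) => H))
      (b : {k : Fin N // k ∈ m} → Bool), bobSlice (V_F v) b = U_F (bobSlice v b))
    (hVB : ∀ (v : PiLp 2 (fun _ : (Fin N → Bool) × ({k : Fin N // k ∈ m} → Bool) => H))
      (i : Fin N → Bool) (b : {k : Fin N // k ∈ m} → Bool),
      V_B v (i, b) = v (i, fun k => xor (b k) (i k.1))) :
    ∀ i : Fin N → Bool,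
      V_F (V_B (V_E (prodState (i, (fun _ => false : {k : Fin N // k ∈ m} → Bool)) e₀)))
        = prodState (i, fun k : {k : Fin N // k ∈ m} => i k.1) (F i) := by
  intro i
  set b₀ : {k : Fin N // k ∈ m} → Bool := fun _ => false with hb₀
  have h1 : V_E (prodState (i, b₀) e₀) = prodState (i, b₀) (E i) := by
    apply slices_ext
    intro b
    rw [hVE, slice_single, slice_single]
    split_ifs with h
    · exact hE i
    · simp
  have h2 : V_B (prodState (i, b₀) (E i))
      = prodState (i, fun k : {k : Fin N // k ∈ m} => i k.1) (E i) := by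
    refine PiLp.ext fun p => ?_
    obtain ⟨i', b⟩ := p
    rw [hVB]
    simp only [prodState, WithLp.equiv_symm_apply, PiLp.toLp_apply, Pi.single_apply, Prod.mk.injEq]
    by_cases hi : i' = i
    · subst hi
      have hiff : ((fun k => xor (b k) (i' k.1)) = b₀)
          ↔ (b = fun k : {k : Fin N // k ∈ m} => i' k.1) := by
        constructor <;> intro h <;> funext k
        · have := congrFun h k
          cases hbk : b k <;> cases hik : i' k.1 <;> simp_all [hb₀]
        · have := congrFun h k
          simp_all [hb₀]
      simp [hiff]
    · simp [hi]
  have h3 : V_F (prodState (i, fun k : {k : Fin N // k ∈ m} => i k.1) (E i))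
      = prodState (i, fun k : {k : Fin N // k ∈ m} => i k.1) (F i) := by
    apply slices_ext
    intro b
    rw [hVF, slice_single, slice_single]
    split_ifs with h
    · exact hF i
    · simp
  rw [h1, h2, h3]
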